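/- arXiv:2111.14506 — 4 statements merged into one kernel-verified Lean document; each statement's English description precedes it below -/
import Mathlib

section
/- Let G be a planar graph, v a vertex, R a subset of V(G), and A = {v1, v2, v3} ⊆ V(G) \ {v} a set dominating N(v) ∩ R. Then there is no vertex z ∈ V(G) \ {v, v1, v2, v3} with |N(v) ∩ N(z) ∩ R| ≥ 10. -/
/-- A minor model of `H` in `G`: pairwise disjoint nonempty connected branch sets,
with an edge of `G` between branch sets of adjacent vertices of `H`. -/
structure MinorModel {α β : Type*} (H : SimpleGraph α) (G : SimpleGraph β) where
  branch : α → Set β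
  nonempty : ∀ a, (branch a).Nonempty
  pairwise_disjoint : ∀ a b, a ≠ b → Disjoint (branch a) (branch b)
  connected : ∀ a, (G.induce (branch a)).Connected
  adj : ∀ a b, H.Adj a b → ∃ u ∈ branch a, ∃ v ∈ branch b, G.Adj u v

/-- `H` is a minor of `G`. -/
def SimpleGraph.HasMinor {β α : Type*} (G : SimpleGraph β) (H : SimpleGraph α) : Prop :=
  Nonempty (MinorModel H G)

/-- Planarity via Wagner's theorem: no `K₅` and no `K₃,₃` minor. -/
def SimpleGraph.IsPlanar {β : Type*} (G : SimpleGraph β) : Prop :=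
  ¬ G.HasMinor (completeGraph (Fin 5)) ∧
  ¬ G.HasMinor (completeBipartiteGraph (Fin 3) (Fin 3))

lemma induce_singleton_connected {V : Type*} (G : SimpleGraph V) (x : V) :
    (G.induce ({x} : Set V)).Connected := by
  haveI : Nonempty ({x} : Set V) := ⟨⟨x, rfl⟩⟩
  exact ⟨fun a b => by rw [Subtype.ext (a.2.trans b.2.symm)]⟩

lemma k33_minor {V : Type*} (G : SimpleGraph V) (x1 x2 x3 y1 y2 y3 : V)
    (hx12 : x1 ≠ x2) (hx13 : x1 ≠ x3) (hx23 : x2 ≠ x3)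
    (hy12 : y1 ≠ y2) (hy13 : y1 ≠ y3) (hy23 : y2 ≠ y3)
    (n11 : x1 ≠ y1) (n12 : x1 ≠ y2) (n13 : x1 ≠ y3)
    (n21 : x2 ≠ y1) (n22 : x2 ≠ y2) (n23 : x2 ≠ y3)
    (n31 : x3 ≠ y1) (n32 : x3 ≠ y2) (n33 : x3 ≠ y3)
    (a11 : G.Adj x1 y1) (a12 : G.Adj x1 y2) (a13 : G.Adj x1 y3)
    (a21 : G.Adj x2 y1) (a22 : G.Adj x2 y2) (a23 : G.Adj x2 y3)
    (a31 : G.Adj x3 y1) (a32 : G.Adj x3 y2) (a33 : G.Adj x3 y3) :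
    G.HasMinor (completeBipartiteGraph (Fin 3) (Fin 3)) := by
  refine ⟨⟨Sum.elim (![{x1},{x2},{x3}]) (![{y1},{y2},{y3}]), ?_, ?_, ?_, ?_⟩⟩
  · rintro (a|a) <;> fin_cases a <;> exact Set.singleton_nonempty _
  · rintro (a|a) (b|b) hab <;> fin_cases a <;> fin_cases b <;>
      first
        | exact absurd rfl hab
        | exact Set.disjoint_singleton.mpr (by
            first | assumption | (apply Ne.symm; assumption))
  · rintro (a|a) <;> fin_cases a <;> exact induce_singleton_connected G _
  · rintro (a|a) (b|b) hab <;> fin_cases a <;> fin_cases b <;>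
      first
        | (refine ⟨_, rfl, _, rfl, ?_⟩;
           first | assumption | (apply SimpleGraph.Adj.symm; assumption))
        | (exfalso; revert hab; simp [completeBipartiteGraph])

/-- In a planar graph, if `{v₁,v₂,v₃} ⊆ V \ {v}` dominates `N(v) ∩ R`, then no vertex
`z ∉ {v,v₁,v₂,v₃}` satisfies `|N(v) ∩ N(z) ∩ R| ≥ 10`. -/
theorem planar_no_big_common_nbhd {V : Type*} [Fintype V] (G : SimpleGraph V)
    (hG : G.IsPlanar) (v v1 v2 v3 : V) (R : Set V)
    (h1 : v1 ≠ v) (h2 : v2 ≠ v) (h3 : v3 ≠ v)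
    (hdom : ∀ w ∈ G.neighborSet v ∩ R, ∃ a ∈ ({v1, v2, v3} : Set V), w = a ∨ G.Adj a w) :
    ¬ ∃ z, z ∉ ({v, v1, v2, v3} : Set V) ∧
      10 ≤ (G.neighborSet v ∩ G.neighborSet z ∩ R).ncard := by
  rintro ⟨z, hz, hcard⟩
  set S : Set V := G.neighborSet v ∩ G.neighborSet z ∩ R with hSdef
  set S' : Set V := S \ {v1, v2, v3} with hS'def
  -- S' has at least 7 elements
  have hSsub : S ⊆ S' ∪ {v1, v2, v3} := by
    intro w hw
    by_cases h : w ∈ ({v1, v2, v3} : Set V)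
    · exact Or.inr h
    · exact Or.inl ⟨hw, h⟩
  have hcard3 : ({v1, v2, v3} : Set V).ncard ≤ 3 := by
    calc ({v1, v2, v3} : Set V).ncard ≤ ({v2, v3} : Set V).ncard + 1 :=
          Set.ncard_insert_le _ _
      _ ≤ (({v3} : Set V).ncard + 1) + 1 := by
          have := Set.ncard_insert_le v2 ({v3} : Set V); omega
      _ ≤ 3 := by simp [Set.ncard_singleton]
  have hS' : 7 ≤ S'.ncard := by
    have h1' : S.ncard ≤ (S' ∪ {v1, v2, v3}).ncard :=
      Set.ncard_le_ncard hSsub (Set.toFinite _)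
    have h2' : (S' ∪ {v1, v2, v3} : Set V).ncard ≤ S'.ncard + ({v1,v2,v3} : Set V).ncard :=
      Set.ncard_union_le _ _
    omega
  -- each element of S' is adjacent to some vi
  have key : ∀ w ∈ S', G.Adj v1 w ∨ G.Adj v2 w ∨ G.Adj v3 w := by
    rintro w ⟨hwS, hwn⟩
    obtain ⟨a, ha, hcase⟩ := hdom w ⟨hwS.1.1, hwS.2⟩
    rcases hcase with rfl | hadj
    · exact absurd ha hwn
    · rcases ha with rfl | rfl | rfl
      · exact Or.inl hadj
      · exact Or.inr (Or.inl hadj)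
      · exact Or.inr (Or.inr hadj)
  -- pigeonhole
  set T1 : Set V := {w ∈ S' | G.Adj v1 w} with hT1
  set T2 : Set V := {w ∈ S' | G.Adj v2 w} with hT2
  set T3 : Set V := {w ∈ S' | G.Adj v3 w} with hT3
  have hsub : S' ⊆ T1 ∪ T2 ∪ T3 := by
    intro w hw
    rcases key w hw with h | h | h
    · exact Or.inl (Or.inl ⟨hw, h⟩)
    · exact Or.inl (Or.inr ⟨hw, h⟩)
    · exact Or.inr ⟨hw, h⟩
  have hbig : 3 ≤ T1.ncard ∨ 3 ≤ T2.ncard ∨ 3 ≤ T3.ncard := by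
    by_contra hc
    push_neg at hc
    have hle : S'.ncard ≤ (T1 ∪ T2 ∪ T3).ncard :=
      Set.ncard_le_ncard hsub (Set.toFinite _)
    have h12 : (T1 ∪ T2 ∪ T3).ncard ≤ (T1 ∪ T2).ncard + T3.ncard := Set.ncard_union_le _ _
    have h12' : (T1 ∪ T2).ncard ≤ T1.ncard + T2.ncard := Set.ncard_union_le _ _
    omega
  -- get the dominating vertex u with 3 neighbors
  obtain ⟨u, hu, hT⟩ : ∃ u ∈ ({v1, v2, v3} : Set V), 3 ≤ {w ∈ S' | G.Adj u w}.ncard := by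
    rcases hbig with h | h | h
    · exact ⟨v1, by simp, h⟩
    · exact ⟨v2, by simp, h⟩
    · exact ⟨v3, by simp, h⟩
  obtain ⟨t, hts, htc⟩ := Set.exists_subset_card_eq hT
  obtain ⟨w1, w2, w3, hw12, hw13, hw23, rfl⟩ := Set.ncard_eq_three.mp htc
  have hw1 := hts (by simp : w1 ∈ ({w1,w2,w3} : Set V))
  have hw2 := hts (by simp : w2 ∈ ({w1,w2,w3} : Set V))
  have hw3 := hts (by simp : w3 ∈ ({w1,w2,w3} : Set V))
  -- facts about u, z, v
  have huv : u ≠ v := by rcases hu with rfl | rfl | rfl <;> assumption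
  have hzv : z ≠ v := by intro h; exact hz (by simp [h])
  have hzu : z ≠ u := by
    rcases hu with rfl | rfl | rfl <;> intro h <;> exact hz (by simp [h])
  have hw : ∀ w, w ∈ ({w ∈ S' | G.Adj u w} : Set V) →
      G.Adj v w ∧ G.Adj z w ∧ G.Adj u w ∧ w ≠ u := by
    rintro w ⟨⟨hwS, hwn⟩, hadj⟩
    exact ⟨hwS.1.1, hwS.1.2, hadj, hadj.ne'⟩
  obtain ⟨hv1', hz1', hu1', hn1⟩ := hw w1 hw1
  obtain ⟨hv2', hz2', hu2', hn2⟩ := hw w2 hw2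
  obtain ⟨hv3', hz3', hu3', hn3⟩ := hw w3 hw3
  exact hG.2 (k33_minor G v z u w1 w2 w3 hzv.symm huv.symm hzu hw12 hw13 hw23
    hv1'.ne hv2'.ne hv3'.ne hz1'.ne hz2'.ne hz3'.ne hn1.symm hn2.symm hn3.symm
    hv1' hv2' hv3' hz1' hz2' hz3' hu1' hu2' hu3')
end

section
/- Let G be a triangle-free planar graph, v a vertex, R ⊆ V(G), and A = {v1, v2, v3} ⊆ V(G) \ {v} a set dominating N(v) ∩ R. Then there is no vertex z ∈ V(G) \ {v, v1, v2, v3} with |N(v) ∩ N(z) ∩ R| ≥ 7. -/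
lemma singleton_induce_connected {V : Type*} (G : SimpleGraph V) (u : V) :
    (G.induce ({u} : Set V)).Connected := by
  rw [SimpleGraph.connected_iff]
  refine ⟨?_, ⟨⟨u, rfl⟩⟩⟩
  rintro ⟨a, ha⟩ ⟨b, hb⟩
  simp only [Set.mem_singleton_iff] at ha hb
  subst ha; subst hb
  exact SimpleGraph.Reachable.refl _

lemma hasMinor_K33 {V : Type*} (G : SimpleGraph V) (x y : Fin 3 → V)
    (hx : Function.Injective x) (hy : Function.Injective y)
    (hxy : ∀ i j, G.Adj (x i) (y j)) :
    G.HasMinor (completeBipartiteGraph (Fin 3) (Fin 3)) := by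
  refine ⟨⟨Sum.elim (fun i => {x i}) (fun j => {y j}), ?_, ?_, ?_, ?_⟩⟩
  · rintro (i | j) <;> exact ⟨_, rfl⟩
  · rintro (i | j) (k | l) hne <;>
      simp only [Sum.elim_inl, Sum.elim_inr, Set.disjoint_singleton]
    · exact fun h => hne (congrArg Sum.inl (hx h))
    · exact (hxy i l).ne
    · exact (hxy k j).ne.symm
    · exact fun h => hne (congrArg Sum.inr (hy h))
  · rintro (i | j) <;> exact singleton_induce_connected ..
  · rintro (i | j) (k | l) hadj
    · simp at hadj
    · exact ⟨x i, rfl, y l, rfl, hxy i l⟩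
    · exact ⟨y j, rfl, x k, rfl, (hxy k j).symm⟩
    · simp at hadj

lemma triangle_false {V : Type*} {G : SimpleGraph V} (htf : G.CliqueFree 3)
    {a b c : V} (h1 : G.Adj a b) (h2 : G.Adj a c) (h3 : G.Adj b c) : False := by
  classical
  exact htf {a, b, c} (SimpleGraph.is3Clique_triple_iff.mpr ⟨h1, h2, h3⟩)

lemma aux_step {V : Type*} [Fintype V] (G : SimpleGraph V)
    (hK : ¬ G.HasMinor (completeBipartiteGraph (Fin 3) (Fin 3)))
    (htf : G.CliqueFree 3) (v z a : V) (hav : a ≠ v) (haz : a ≠ z) (hvz : v ≠ z)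
    (T : Set V) (hT : T ⊆ G.neighborSet v ∩ G.neighborSet z)
    (hTa : T ⊆ insert a (G.neighborSet a)) (hcard : 3 ≤ T.ncard) : False := by
  obtain ⟨t, hts, htcard⟩ := Set.exists_subset_card_eq hcard
  rw [Set.ncard_eq_three] at htcard
  obtain ⟨p, q, r, hpq, hpr, hqr, rfl⟩ := htcard
  have hp := hts (by simp : p ∈ ({p, q, r} : Set V))
  have hq := hts (by simp : q ∈ ({p, q, r} : Set V))
  have hr := hts (by simp : r ∈ ({p, q, r} : Set V))
  -- each element of T is adjacent to v and z
  have adjv : ∀ w ∈ T, G.Adj v w := fun w hw => (hT hw).1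
  have adjz : ∀ w ∈ T, G.Adj z w := fun w hw => (hT hw).2
  have adja : ∀ w ∈ T, w ≠ a → G.Adj a w := by
    intro w hw hwa
    rcases hTa hw with h | h
    · exact absurd h hwa
    · exact h
  -- case: a is one of p, q, r
  by_cases hpa : p = a
  · subst hpa
    exact triangle_false htf (adjv p hp) (adjv q hq) (adja q hq (Ne.symm hpq))
  by_cases hqa : q = a
  · subst hqa
    exact triangle_false htf (adjv q hq) (adjv p hp) (adja p hp hpa)
  by_cases hra : r = a
  · subst hra
    exact triangle_false htf (adjv r hr) (adjv p hp) (adja p hp hpa)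
  -- otherwise K₃,₃ minor with parts {v, z, a} and {p, q, r}
  refine hK (hasMinor_K33 G ![v, z, a] ![p, q, r] ?_ ?_ ?_)
  · intro i j h
    fin_cases i <;> fin_cases j <;> simp_all
  · intro i j h
    fin_cases i <;> fin_cases j <;> simp_all
  · intro i j
    fin_cases i <;> fin_cases j <;> simp <;>
      first
        | exact adjv p hp | exact adjv q hq | exact adjv r hr
        | exact adjz p hp | exact adjz q hq | exact adjz r hr
        | exact adja p hp hpa | exact adja q hq hqa | exact adja r hr hra

/-- In a triangle-free planar graph, if `{v₁,v₂,v₃} ⊆ V \ {v}` dominates `N(v) ∩ R`, then no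
vertex `z ∉ {v,v₁,v₂,v₃}` satisfies `|N(v) ∩ N(z) ∩ R| ≥ 7`. -/
theorem triangleFree_planar_no_big_common_nbhd {V : Type*} [Fintype V] (G : SimpleGraph V)
    (hG : G.IsPlanar) (htf : G.CliqueFree 3) (v v1 v2 v3 : V) (R : Set V)
    (h1 : v1 ≠ v) (h2 : v2 ≠ v) (h3 : v3 ≠ v)
    (hdom : ∀ w ∈ G.neighborSet v ∩ R, ∃ a ∈ ({v1, v2, v3} : Set V), w = a ∨ G.Adj a w) :
    ¬ ∃ z, z ∉ ({v, v1, v2, v3} : Set V) ∧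
      7 ≤ (G.neighborSet v ∩ G.neighborSet z ∩ R).ncard := by
  rintro ⟨z, hz, hcard⟩
  simp only [Set.mem_insert_iff, Set.mem_singleton_iff, not_or] at hz
  obtain ⟨hzv, hz1, hz2, hz3⟩ := hz
  set S := G.neighborSet v ∩ G.neighborSet z ∩ R with hSdef
  set N : V → Set V := fun a => insert a (G.neighborSet a) with hNdef
  have hSsub : S ⊆ (S ∩ N v1) ∪ (S ∩ N v2) ∪ (S ∩ N v3) := by
    intro w hw
    obtain ⟨a, ha, hwa⟩ := hdom w ⟨hw.1.1, hw.2⟩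
    have hwN : w ∈ N a := by
      rcases hwa with rfl | h
      · exact Set.mem_insert _ _
      · exact Set.mem_insert_of_mem _ h
    rcases ha with rfl | rfl | rfl
    · exact Or.inl (Or.inl ⟨hw, hwN⟩)
    · exact Or.inl (Or.inr ⟨hw, hwN⟩)
    · exact Or.inr ⟨hw, hwN⟩
  have hsum : S.ncard ≤ (S ∩ N v1).ncard + (S ∩ N v2).ncard + (S ∩ N v3).ncard := by
    calc S.ncard ≤ ((S ∩ N v1) ∪ (S ∩ N v2) ∪ (S ∩ N v3)).ncard :=
          Set.ncard_le_ncard hSsub (Set.toFinite _)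
      _ ≤ ((S ∩ N v1) ∪ (S ∩ N v2)).ncard + (S ∩ N v3).ncard := Set.ncard_union_le _ _
      _ ≤ (S ∩ N v1).ncard + (S ∩ N v2).ncard + (S ∩ N v3).ncard := by
          have := Set.ncard_union_le (S ∩ N v1) (S ∩ N v2)
          omega
  have hbig : 3 ≤ (S ∩ N v1).ncard ∨ 3 ≤ (S ∩ N v2).ncard ∨ 3 ≤ (S ∩ N v3).ncard := by
    omega
  have hTsub : ∀ a, S ∩ N a ⊆ G.neighborSet v ∩ G.neighborSet z :=
    fun a w hw => ⟨hw.1.1.1, hw.1.1.2⟩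
  rcases hbig with h | h | h
  · exact aux_step G hG.2 htf v z v1 h1 (Ne.symm hz1) (Ne.symm hzv) (S ∩ N v1)
      (hTsub v1) (fun w hw => hw.2) h
  · exact aux_step G hG.2 htf v z v2 h2 (Ne.symm hz2) (Ne.symm hzv) (S ∩ N v2)
      (hTsub v2) (fun w hw => hw.2) h
  · exact aux_step G hG.2 htf v z v3 h3 (Ne.symm hz3) (Ne.symm hzv) (S ∩ N v3)
      (hTsub v3) (fun w hw => hw.2) h
end

section
/- Consider the linear program over nonnegative reals d_1,…,d_30, r_1,…,r_30 with constraints: (a) r_i ≥ Σ_{j≤i} d_j for all 1 ≤ i ≤ 30; (b) r_i ≤ i+1 for all 1 ≤ i ≤ 30; (c) d_i ≤ 3 r_i/(i-6) for all 7 ≤ i ≤ 30; (d) r_i ≤ r_{i+1} - (i-5) d_{i+1}/3 for all 1 ≤ i ≤ 29. Then Σ_{i=1}^{30} d_i ≤ 15.9. -/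
set_option maxHeartbeats 4000000 in
set_option maxRecDepth 8000 in
/-- The linear program bounding the size of the third-phase dominating set on planar graphs:
under the stated constraints, `∑_{i=1}^{30} d_i ≤ 15.9`. -/
theorem planar_lp_bound (d r : ℕ → ℝ)
    (hd : ∀ i, 0 ≤ d i) (hr : ∀ i, 0 ≤ r i)
    (h1 : ∀ i, 1 ≤ i → i ≤ 30 → (∑ j ∈ Finset.Icc 1 i, d j) ≤ r i)
    (h2 : ∀ i, 1 ≤ i → i ≤ 30 → r i ≤ (i : ℝ) + 1)
    (h3 : ∀ i, 7 ≤ i → i ≤ 30 → d i ≤ 3 * r i / ((i : ℝ) - 6))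
    (h4 : ∀ i, 1 ≤ i → i ≤ 29 → r i ≤ r (i + 1) - ((i : ℝ) - 5) * d (i + 1) / 3) :
    (∑ i ∈ Finset.Icc 1 30, d i) ≤ 15.9 := by
  have s2 : (∑ j ∈ Finset.Icc 1 2, d j) = (∑ j ∈ Finset.Icc 1 1, d j) + d 2 := Finset.sum_Icc_succ_top (by norm_num) _
  have s3 : (∑ j ∈ Finset.Icc 1 3, d j) = (∑ j ∈ Finset.Icc 1 2, d j) + d 3 := Finset.sum_Icc_succ_top (by norm_num) _
  have s4 : (∑ j ∈ Finset.Icc 1 4, d j) = (∑ j ∈ Finset.Icc 1 3, d j) + d 4 := Finset.sum_Icc_succ_top (by norm_num) _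
  have s5 : (∑ j ∈ Finset.Icc 1 5, d j) = (∑ j ∈ Finset.Icc 1 4, d j) + d 5 := Finset.sum_Icc_succ_top (by norm_num) _
  have s6 : (∑ j ∈ Finset.Icc 1 6, d j) = (∑ j ∈ Finset.Icc 1 5, d j) + d 6 := Finset.sum_Icc_succ_top (by norm_num) _
  have s7 : (∑ j ∈ Finset.Icc 1 7, d j) = (∑ j ∈ Finset.Icc 1 6, d j) + d 7 := Finset.sum_Icc_succ_top (by norm_num) _
  have s8 : (∑ j ∈ Finset.Icc 1 8, d j) = (∑ j ∈ Finset.Icc 1 7, d j) + d 8 := Finset.sum_Icc_succ_top (by norm_num) _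
  have s9 : (∑ j ∈ Finset.Icc 1 9, d j) = (∑ j ∈ Finset.Icc 1 8, d j) + d 9 := Finset.sum_Icc_succ_top (by norm_num) _
  have s10 : (∑ j ∈ Finset.Icc 1 10, d j) = (∑ j ∈ Finset.Icc 1 9, d j) + d 10 := Finset.sum_Icc_succ_top (by norm_num) _
  have s11 : (∑ j ∈ Finset.Icc 1 11, d j) = (∑ j ∈ Finset.Icc 1 10, d j) + d 11 := Finset.sum_Icc_succ_top (by norm_num) _
  have s12 : (∑ j ∈ Finset.Icc 1 12, d j) = (∑ j ∈ Finset.Icc 1 11, d j) + d 12 := Finset.sum_Icc_succ_top (by norm_num) _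
  have s13 : (∑ j ∈ Finset.Icc 1 13, d j) = (∑ j ∈ Finset.Icc 1 12, d j) + d 13 := Finset.sum_Icc_succ_top (by norm_num) _
  have s14 : (∑ j ∈ Finset.Icc 1 14, d j) = (∑ j ∈ Finset.Icc 1 13, d j) + d 14 := Finset.sum_Icc_succ_top (by norm_num) _
  have s15 : (∑ j ∈ Finset.Icc 1 15, d j) = (∑ j ∈ Finset.Icc 1 14, d j) + d 15 := Finset.sum_Icc_succ_top (by norm_num) _
  have s16 : (∑ j ∈ Finset.Icc 1 16, d j) = (∑ j ∈ Finset.Icc 1 15, d j) + d 16 := Finset.sum_Icc_succ_top (by norm_num) _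
  have s17 : (∑ j ∈ Finset.Icc 1 17, d j) = (∑ j ∈ Finset.Icc 1 16, d j) + d 17 := Finset.sum_Icc_succ_top (by norm_num) _
  have s18 : (∑ j ∈ Finset.Icc 1 18, d j) = (∑ j ∈ Finset.Icc 1 17, d j) + d 18 := Finset.sum_Icc_succ_top (by norm_num) _
  have s19 : (∑ j ∈ Finset.Icc 1 19, d j) = (∑ j ∈ Finset.Icc 1 18, d j) + d 19 := Finset.sum_Icc_succ_top (by norm_num) _
  have s20 : (∑ j ∈ Finset.Icc 1 20, d j) = (∑ j ∈ Finset.Icc 1 19, d j) + d 20 := Finset.sum_Icc_succ_top (by norm_num) _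
  have s21 : (∑ j ∈ Finset.Icc 1 21, d j) = (∑ j ∈ Finset.Icc 1 20, d j) + d 21 := Finset.sum_Icc_succ_top (by norm_num) _
  have s22 : (∑ j ∈ Finset.Icc 1 22, d j) = (∑ j ∈ Finset.Icc 1 21, d j) + d 22 := Finset.sum_Icc_succ_top (by norm_num) _
  have s23 : (∑ j ∈ Finset.Icc 1 23, d j) = (∑ j ∈ Finset.Icc 1 22, d j) + d 23 := Finset.sum_Icc_succ_top (by norm_num) _
  have s24 : (∑ j ∈ Finset.Icc 1 24, d j) = (∑ j ∈ Finset.Icc 1 23, d j) + d 24 := Finset.sum_Icc_succ_top (by norm_num) _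
  have s25 : (∑ j ∈ Finset.Icc 1 25, d j) = (∑ j ∈ Finset.Icc 1 24, d j) + d 25 := Finset.sum_Icc_succ_top (by norm_num) _
  have s26 : (∑ j ∈ Finset.Icc 1 26, d j) = (∑ j ∈ Finset.Icc 1 25, d j) + d 26 := Finset.sum_Icc_succ_top (by norm_num) _
  have s27 : (∑ j ∈ Finset.Icc 1 27, d j) = (∑ j ∈ Finset.Icc 1 26, d j) + d 27 := Finset.sum_Icc_succ_top (by norm_num) _
  have s28 : (∑ j ∈ Finset.Icc 1 28, d j) = (∑ j ∈ Finset.Icc 1 27, d j) + d 28 := Finset.sum_Icc_succ_top (by norm_num) _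
  have s29 : (∑ j ∈ Finset.Icc 1 29, d j) = (∑ j ∈ Finset.Icc 1 28, d j) + d 29 := Finset.sum_Icc_succ_top (by norm_num) _
  have s30 : (∑ j ∈ Finset.Icc 1 30, d j) = (∑ j ∈ Finset.Icc 1 29, d j) + d 30 := Finset.sum_Icc_succ_top (by norm_num) _
  have a1 := h1 1 (by norm_num) (by norm_num)
  have b1 := h2 1 (by norm_num) (by norm_num)
  have p1 := hd 1
  have q1 := hr 1
  have a2 := h1 2 (by norm_num) (by norm_num)
  have b2 := h2 2 (by norm_num) (by norm_num)
  have p2 := hd 2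
  have q2 := hr 2
  have a3 := h1 3 (by norm_num) (by norm_num)
  have b3 := h2 3 (by norm_num) (by norm_num)
  have p3 := hd 3
  have q3 := hr 3
  have a4 := h1 4 (by norm_num) (by norm_num)
  have b4 := h2 4 (by norm_num) (by norm_num)
  have p4 := hd 4
  have q4 := hr 4
  have a5 := h1 5 (by norm_num) (by norm_num)
  have b5 := h2 5 (by norm_num) (by norm_num)
  have p5 := hd 5
  have q5 := hr 5
  have a6 := h1 6 (by norm_num) (by norm_num)
  have b6 := h2 6 (by norm_num) (by norm_num)
  have p6 := hd 6
  have q6 := hr 6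
  have a7 := h1 7 (by norm_num) (by norm_num)
  have b7 := h2 7 (by norm_num) (by norm_num)
  have p7 := hd 7
  have q7 := hr 7
  have a8 := h1 8 (by norm_num) (by norm_num)
  have b8 := h2 8 (by norm_num) (by norm_num)
  have p8 := hd 8
  have q8 := hr 8
  have a9 := h1 9 (by norm_num) (by norm_num)
  have b9 := h2 9 (by norm_num) (by norm_num)
  have p9 := hd 9
  have q9 := hr 9
  have a10 := h1 10 (by norm_num) (by norm_num)
  have b10 := h2 10 (by norm_num) (by norm_num)
  have p10 := hd 10
  have q10 := hr 10
  have a11 := h1 11 (by norm_num) (by norm_num)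
  have b11 := h2 11 (by norm_num) (by norm_num)
  have p11 := hd 11
  have q11 := hr 11
  have a12 := h1 12 (by norm_num) (by norm_num)
  have b12 := h2 12 (by norm_num) (by norm_num)
  have p12 := hd 12
  have q12 := hr 12
  have a13 := h1 13 (by norm_num) (by norm_num)
  have b13 := h2 13 (by norm_num) (by norm_num)
  have p13 := hd 13
  have q13 := hr 13
  have a14 := h1 14 (by norm_num) (by norm_num)
  have b14 := h2 14 (by norm_num) (by norm_num)
  have p14 := hd 14
  have q14 := hr 14
  have a15 := h1 15 (by norm_num) (by norm_num)
  have b15 := h2 15 (by norm_num) (by norm_num)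
  have p15 := hd 15
  have q15 := hr 15
  have a16 := h1 16 (by norm_num) (by norm_num)
  have b16 := h2 16 (by norm_num) (by norm_num)
  have p16 := hd 16
  have q16 := hr 16
  have a17 := h1 17 (by norm_num) (by norm_num)
  have b17 := h2 17 (by norm_num) (by norm_num)
  have p17 := hd 17
  have q17 := hr 17
  have a18 := h1 18 (by norm_num) (by norm_num)
  have b18 := h2 18 (by norm_num) (by norm_num)
  have p18 := hd 18
  have q18 := hr 18
  have a19 := h1 19 (by norm_num) (by norm_num)
  have b19 := h2 19 (by norm_num) (by norm_num)
  have p19 := hd 19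
  have q19 := hr 19
  have a20 := h1 20 (by norm_num) (by norm_num)
  have b20 := h2 20 (by norm_num) (by norm_num)
  have p20 := hd 20
  have q20 := hr 20
  have a21 := h1 21 (by norm_num) (by norm_num)
  have b21 := h2 21 (by norm_num) (by norm_num)
  have p21 := hd 21
  have q21 := hr 21
  have a22 := h1 22 (by norm_num) (by norm_num)
  have b22 := h2 22 (by norm_num) (by norm_num)
  have p22 := hd 22
  have q22 := hr 22
  have a23 := h1 23 (by norm_num) (by norm_num)
  have b23 := h2 23 (by norm_num) (by norm_num)
  have p23 := hd 23
  have q23 := hr 23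
  have a24 := h1 24 (by norm_num) (by norm_num)
  have b24 := h2 24 (by norm_num) (by norm_num)
  have p24 := hd 24
  have q24 := hr 24
  have a25 := h1 25 (by norm_num) (by norm_num)
  have b25 := h2 25 (by norm_num) (by norm_num)
  have p25 := hd 25
  have q25 := hr 25
  have a26 := h1 26 (by norm_num) (by norm_num)
  have b26 := h2 26 (by norm_num) (by norm_num)
  have p26 := hd 26
  have q26 := hr 26
  have a27 := h1 27 (by norm_num) (by norm_num)
  have b27 := h2 27 (by norm_num) (by norm_num)
  have p27 := hd 27
  have q27 := hr 27
  have a28 := h1 28 (by norm_num) (by norm_num)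
  have b28 := h2 28 (by norm_num) (by norm_num)
  have p28 := hd 28
  have q28 := hr 28
  have a29 := h1 29 (by norm_num) (by norm_num)
  have b29 := h2 29 (by norm_num) (by norm_num)
  have p29 := hd 29
  have q29 := hr 29
  have a30 := h1 30 (by norm_num) (by norm_num)
  have b30 := h2 30 (by norm_num) (by norm_num)
  have p30 := hd 30
  have q30 := hr 30
  have c7 : d 7 * ((7:ℝ) - 6) ≤ 3 * r 7 := by have := h3 7 (by norm_num) (by norm_num); rw [le_div_iff₀ (by norm_num)] at this; push_cast at this ⊢; linarith
  have c8 : d 8 * ((8:ℝ) - 6) ≤ 3 * r 8 := by have := h3 8 (by norm_num) (by norm_num); rw [le_div_iff₀ (by norm_num)] at this; push_cast at this ⊢; linarith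
  have c9 : d 9 * ((9:ℝ) - 6) ≤ 3 * r 9 := by have := h3 9 (by norm_num) (by norm_num); rw [le_div_iff₀ (by norm_num)] at this; push_cast at this ⊢; linarith
  have c10 : d 10 * ((10:ℝ) - 6) ≤ 3 * r 10 := by have := h3 10 (by norm_num) (by norm_num); rw [le_div_iff₀ (by norm_num)] at this; push_cast at this ⊢; linarith
  have c11 : d 11 * ((11:ℝ) - 6) ≤ 3 * r 11 := by have := h3 11 (by norm_num) (by norm_num); rw [le_div_iff₀ (by norm_num)] at this; push_cast at this ⊢; linarith
  have c12 : d 12 * ((12:ℝ) - 6) ≤ 3 * r 12 := by have := h3 12 (by norm_num) (by norm_num); rw [le_div_iff₀ (by norm_num)] at this; push_cast at this ⊢; linarith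
  have c13 : d 13 * ((13:ℝ) - 6) ≤ 3 * r 13 := by have := h3 13 (by norm_num) (by norm_num); rw [le_div_iff₀ (by norm_num)] at this; push_cast at this ⊢; linarith
  have c14 : d 14 * ((14:ℝ) - 6) ≤ 3 * r 14 := by have := h3 14 (by norm_num) (by norm_num); rw [le_div_iff₀ (by norm_num)] at this; push_cast at this ⊢; linarith
  have c15 : d 15 * ((15:ℝ) - 6) ≤ 3 * r 15 := by have := h3 15 (by norm_num) (by norm_num); rw [le_div_iff₀ (by norm_num)] at this; push_cast at this ⊢; linarith
  have c16 : d 16 * ((16:ℝ) - 6) ≤ 3 * r 16 := by have := h3 16 (by norm_num) (by norm_num); rw [le_div_iff₀ (by norm_num)] at this; push_cast at this ⊢; linarith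
  have c17 : d 17 * ((17:ℝ) - 6) ≤ 3 * r 17 := by have := h3 17 (by norm_num) (by norm_num); rw [le_div_iff₀ (by norm_num)] at this; push_cast at this ⊢; linarith
  have c18 : d 18 * ((18:ℝ) - 6) ≤ 3 * r 18 := by have := h3 18 (by norm_num) (by norm_num); rw [le_div_iff₀ (by norm_num)] at this; push_cast at this ⊢; linarith
  have c19 : d 19 * ((19:ℝ) - 6) ≤ 3 * r 19 := by have := h3 19 (by norm_num) (by norm_num); rw [le_div_iff₀ (by norm_num)] at this; push_cast at this ⊢; linarith
  have c20 : d 20 * ((20:ℝ) - 6) ≤ 3 * r 20 := by have := h3 20 (by norm_num) (by norm_num); rw [le_div_iff₀ (by norm_num)] at this; push_cast at this ⊢; linarith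
  have c21 : d 21 * ((21:ℝ) - 6) ≤ 3 * r 21 := by have := h3 21 (by norm_num) (by norm_num); rw [le_div_iff₀ (by norm_num)] at this; push_cast at this ⊢; linarith
  have c22 : d 22 * ((22:ℝ) - 6) ≤ 3 * r 22 := by have := h3 22 (by norm_num) (by norm_num); rw [le_div_iff₀ (by norm_num)] at this; push_cast at this ⊢; linarith
  have c23 : d 23 * ((23:ℝ) - 6) ≤ 3 * r 23 := by have := h3 23 (by norm_num) (by norm_num); rw [le_div_iff₀ (by norm_num)] at this; push_cast at this ⊢; linarith
  have c24 : d 24 * ((24:ℝ) - 6) ≤ 3 * r 24 := by have := h3 24 (by norm_num) (by norm_num); rw [le_div_iff₀ (by norm_num)] at this; push_cast at this ⊢; linarith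
  have c25 : d 25 * ((25:ℝ) - 6) ≤ 3 * r 25 := by have := h3 25 (by norm_num) (by norm_num); rw [le_div_iff₀ (by norm_num)] at this; push_cast at this ⊢; linarith
  have c26 : d 26 * ((26:ℝ) - 6) ≤ 3 * r 26 := by have := h3 26 (by norm_num) (by norm_num); rw [le_div_iff₀ (by norm_num)] at this; push_cast at this ⊢; linarith
  have c27 : d 27 * ((27:ℝ) - 6) ≤ 3 * r 27 := by have := h3 27 (by norm_num) (by norm_num); rw [le_div_iff₀ (by norm_num)] at this; push_cast at this ⊢; linarith
  have c28 : d 28 * ((28:ℝ) - 6) ≤ 3 * r 28 := by have := h3 28 (by norm_num) (by norm_num); rw [le_div_iff₀ (by norm_num)] at this; push_cast at this ⊢; linarith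
  have c29 : d 29 * ((29:ℝ) - 6) ≤ 3 * r 29 := by have := h3 29 (by norm_num) (by norm_num); rw [le_div_iff₀ (by norm_num)] at this; push_cast at this ⊢; linarith
  have c30 : d 30 * ((30:ℝ) - 6) ≤ 3 * r 30 := by have := h3 30 (by norm_num) (by norm_num); rw [le_div_iff₀ (by norm_num)] at this; push_cast at this ⊢; linarith
  have e1 := h4 1 (by norm_num) (by norm_num)
  have e2 := h4 2 (by norm_num) (by norm_num)
  have e3 := h4 3 (by norm_num) (by norm_num)
  have e4 := h4 4 (by norm_num) (by norm_num)
  have e5 := h4 5 (by norm_num) (by norm_num)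
  have e6 := h4 6 (by norm_num) (by norm_num)
  have e7 := h4 7 (by norm_num) (by norm_num)
  have e8 := h4 8 (by norm_num) (by norm_num)
  have e9 := h4 9 (by norm_num) (by norm_num)
  have e10 := h4 10 (by norm_num) (by norm_num)
  have e11 := h4 11 (by norm_num) (by norm_num)
  have e12 := h4 12 (by norm_num) (by norm_num)
  have e13 := h4 13 (by norm_num) (by norm_num)
  have e14 := h4 14 (by norm_num) (by norm_num)
  have e15 := h4 15 (by norm_num) (by norm_num)
  have e16 := h4 16 (by norm_num) (by norm_num)
  have e17 := h4 17 (by norm_num) (by norm_num)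
  have e18 := h4 18 (by norm_num) (by norm_num)
  have e19 := h4 19 (by norm_num) (by norm_num)
  have e20 := h4 20 (by norm_num) (by norm_num)
  have e21 := h4 21 (by norm_num) (by norm_num)
  have e22 := h4 22 (by norm_num) (by norm_num)
  have e23 := h4 23 (by norm_num) (by norm_num)
  have e24 := h4 24 (by norm_num) (by norm_num)
  have e25 := h4 25 (by norm_num) (by norm_num)
  have e26 := h4 26 (by norm_num) (by norm_num)
  have e27 := h4 27 (by norm_num) (by norm_num)
  have e28 := h4 28 (by norm_num) (by norm_num)
  have e29 := h4 29 (by norm_num) (by norm_num)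
  push_cast at b1 b2 b3 b4 b5 b6 b7 b8 b9 b10 b11 b12 b13 b14 b15 b16 b17 b18 b19 b20 b21 b22 b23 b24 b25 b26 b27 b28 b29 b30 e1 e2 e3 e4 e5 e6 e7 e8 e9 e10 e11 e12 e13 e14 e15 e16 e17 e18 e19 e20 e21 e22 e23 e24 e25 e26 e27 e28 e29
  norm_num only
  linarith
end

section
/- Let G be a graph with a partial dominating set already chosen, let R be the set of non-dominated vertices, and suppose every vertex has at most Δmax neighbors in R. Run the greedy procedure: for i = Δmax down to 1, every vertex of R adjacent to (or equal to) a vertex of current residual degree i picks one such vertex into the set Δ_i, and R is updated to R \ N[Δ_i]. Then after the iteration with parameter i ≥ 1 finishes, every vertex has residual degree at most i - 1, and after all iterations the union of the Δ_i together with the initial partial dominating set dominates G. -/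
/-- Correctness of the greedy phase. `S (i+1)` is the set of non-dominated (red) vertices at
the start of the iteration with parameter `i` (so `S (Δmax+1)` is the initial red set), `Δ i`
is the set of dominators picked in iteration `i`, and `S i = S (i+1) \ N[Δ i]`. Every vertex
of `Δ i` has residual degree exactly `i`, and every red vertex having some vertex of residual
degree `i` in its closed neighborhood picks one such vertex. Then after the iteration with
parameter `i ≥ 1`, every vertex has residual degree at most `i - 1`, and after all iterations
no non-dominated vertex remains (so the `Δ i` together with the initial partial dominating
set dominate `G`). -/
theorem greedy_correctness {V : Type*} [Fintype V] (G : SimpleGraph V)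
    (Δmax : ℕ) (S Δ : ℕ → Set V)
    (hmax : ∀ v, (G.neighborSet v ∩ S (Δmax + 1)).ncard ≤ Δmax)
    (hstep : ∀ i ≤ Δmax, S i = S (i + 1) \ (⋃ u ∈ Δ i, insert u (G.neighborSet u)))
    (hΔdeg : ∀ i ≤ Δmax, ∀ u ∈ Δ i, (G.neighborSet u ∩ S (i + 1)).ncard = i)
    (hcover : ∀ i ≤ Δmax, ∀ v ∈ S (i + 1),
      (∃ u, (G.neighborSet u ∩ S (i + 1)).ncard = i ∧ (u = v ∨ G.Adj u v)) →
      ∃ u ∈ Δ i, u = v ∨ G.Adj u v) :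
    (∀ i, 1 ≤ i → i ≤ Δmax → ∀ v, (G.neighborSet v ∩ S i).ncard ≤ i - 1) ∧
    S 0 = ∅ := by
  have hsub : ∀ i ≤ Δmax, S i ⊆ S (i + 1) := by
    intro i hi
    rw [hstep i hi]; exact Set.diff_subset
  -- core step
  have step : ∀ i, 1 ≤ i → i ≤ Δmax →
      (∀ v, (G.neighborSet v ∩ S (i + 1)).ncard ≤ i) →
      ∀ v, (G.neighborSet v ∩ S i).ncard ≤ i - 1 := by
    intro i hi1 hiΔ ih v
    by_contra h
    push_neg at h
    have hle : (G.neighborSet v ∩ S i).ncard ≤ (G.neighborSet v ∩ S (i + 1)).ncard :=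
      Set.ncard_le_ncard (Set.inter_subset_inter_right _ (hsub i hiΔ)) (Set.toFinite _)
    have hi' : (G.neighborSet v ∩ S i).ncard = i := le_antisymm (hle.trans (ih v)) (by omega)
    have hvdeg : (G.neighborSet v ∩ S (i + 1)).ncard = i := le_antisymm (ih v) (by omega)
    have hne : (G.neighborSet v ∩ S i).Nonempty := by
      rw [← Set.ncard_pos (Set.toFinite _)]; omega
    obtain ⟨w, hwN, hwS⟩ := hne
    have hwS' : w ∈ S (i + 1) := hsub i hiΔ hwS
    obtain ⟨u, huΔ, huw⟩ := hcover i hiΔ w hwS' ⟨v, hvdeg, Or.inr hwN⟩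
    have : w ∈ (⋃ u ∈ Δ i, insert u (G.neighborSet u)) := by
      refine Set.mem_biUnion huΔ ?_
      rcases huw with h1 | h1
      · exact Set.mem_insert_iff.2 (Or.inl h1.symm)
      · exact Set.mem_insert_iff.2 (Or.inr h1)
    rw [hstep i hiΔ] at hwS
    exact hwS.2 this
  -- main bound by downward induction
  have key : ∀ j, j ≤ Δmax → ∀ v, (G.neighborSet v ∩ S (Δmax + 1 - j)).ncard ≤ Δmax - j := by
    intro j
    induction j with
    | zero => simpa using hmax
    | succ j ih =>
      intro hj v
      have hj' : j ≤ Δmax := by omega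
      have e1 : Δmax + 1 - (j + 1) = Δmax - j := by omega
      have e2 : Δmax + 1 - j = (Δmax - j) + 1 := by omega
      rw [e1]
      have := step (Δmax - j) (by omega) (by omega) (by
        intro w
        have := ih hj' w
        rwa [e2] at this)
      have h := this v
      omega
  have part1 : ∀ i, 1 ≤ i → i ≤ Δmax → ∀ v, (G.neighborSet v ∩ S i).ncard ≤ i - 1 := by
    intro i hi1 hiΔ v
    have h := key (Δmax + 1 - i) (by omega) v
    have e : Δmax + 1 - (Δmax + 1 - i) = i := by omega
    rw [e] at h
    omega
  refine ⟨part1, ?_⟩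
  have h1 : ∀ v, (G.neighborSet v ∩ S 1).ncard = 0 := by
    intro v
    rcases Nat.eq_zero_or_pos Δmax with h0 | h0
    · subst h0
      simpa using Nat.le_zero.mp (hmax v)
    · have h := part1 1 le_rfl h0 v; omega
  ext v
  simp only [Set.mem_empty_iff_false, iff_false]
  intro hv
  have hv1 : v ∈ S 1 := hsub 0 (Nat.zero_le _) hv
  obtain ⟨u, huΔ, huv⟩ := hcover 0 (Nat.zero_le _) v hv1 ⟨v, h1 v, Or.inl rfl⟩
  have : v ∈ (⋃ u ∈ Δ 0, insert u (G.neighborSet u)) := by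
    refine Set.mem_biUnion huΔ ?_
    rcases huv with h | h
    · exact Set.mem_insert_iff.2 (Or.inl h.symm)
    · exact Set.mem_insert_iff.2 (Or.inr h)
  rw [hstep 0 (Nat.zero_le _)] at hv
  exact hv.2 this
end
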